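/- arXiv:2108.03530 — 7 statements merged into one kernel-verified Lean document; each statement's English description precedes it below -/
import Mathlib

section
/- Let r and k be positive integers with k < r, and for integers n with k ≤ n ≤ r define h(n) = H_r + H_n − H_{r−n} − H_{n−k}. Let s = √(k(r+1)) − 1 and suppose k ≤ ⌊s⌋ and ⌈s⌉ ≤ r. Then for every integer n with k ≤ n ≤ r, h(n) ≥ min( h(⌊s⌋), h(⌈s⌉) ); that is, h attains its minimum over {k, k+1, …, r} at ⌊√(k(r+1)) − 1⌋ or ⌈√(k(r+1)) − 1⌉. -/
/-- `hfun r k n = H_r + H_n - H_{r-n} - H_{n-k}` (natural subtraction inside),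
    as a real number. -/
noncomputable def hfun (r k n : ℕ) : ℝ :=
  (harmonic r : ℝ) + (harmonic n : ℝ) - (harmonic (r - n) : ℝ) - (harmonic (n - k) : ℝ)

/-!
Since `H_{j+1} - H_j = 1/(j+1)`, the forward difference of `h` is
`1/(n+1) + 1/(r-n) - 1/(n-k+1) = ((n+1)^2 - k(r+1)) / ((n+1)(r-n)(n-k+1))`,
whose sign is that of `(n+1)^2 - k(r+1)`. So `h` decreases up to `⌊s⌋` and increases from `⌈s⌉`
on, where `s + 1 = √(k(r+1))`.
-/

lemma min_le_of_antitoneOn_of_monotoneOn {α : Type*} [LinearOrder α] {f : ℕ → α}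
    {k m M r n : ℕ} (hanti : AntitoneOn f (Set.Icc k m)) (hmono : MonotoneOn f (Set.Icc M r))
    (hMm : M ≤ m + 1) (hkn : k ≤ n) (hnr : n ≤ r) : min (f m) (f M) ≤ f n := by
  rcases le_or_gt n m with hnm | hmn
  · exact (min_le_left _ _).trans
      (hanti ⟨hkn, hnm⟩ ⟨hkn.trans hnm, le_rfl⟩ hnm)
  · exact (min_le_right _ _).trans
      (hmono ⟨le_rfl, by omega⟩ ⟨by omega, hnr⟩ (by omega))

section hfun

variable {r k n : ℕ}

lemma hfun_succ_sub (hkn : k ≤ n) (hnr : n < r) :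
    hfun r k (n + 1) - hfun r k n =
      (((n : ℝ) + 1) ^ 2 - k * (r + 1)) / ((n + 1) * (r - n) * (n - k + 1)) := by
  have hrn : r - n = (r - (n + 1)) + 1 := by omega
  have hnk : n + 1 - k = (n - k) + 1 := by omega
  have hrn_pos : (0 : ℝ) < r - n := sub_pos.mpr (by exact_mod_cast hnr)
  have hnk_pos : (0 : ℝ) < n - k + 1 := by
    have : (k : ℝ) ≤ n := by exact_mod_cast hkn
    linarith
  unfold hfun
  rw [hrn, hnk, harmonic_succ, harmonic_succ, harmonic_succ]
  push_cast [Nat.cast_sub hkn, Nat.cast_sub (Nat.succ_le_of_lt hnr)]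
  rw [show (r : ℝ) - (n + 1) + 1 = r - n by ring]
  field_simp
  ring

lemma hfun_denom_pos (hkn : k ≤ n) (hnr : n < r) :
    (0 : ℝ) < (n + 1) * (r - n) * (n - k + 1) := by
  have : (k : ℝ) ≤ n := by exact_mod_cast hkn
  have : (n : ℝ) < r := by exact_mod_cast hnr
  apply mul_pos (mul_pos _ _) _ <;> linarith

lemma hfun_succ_le (hkn : k ≤ n) (hnr : n < r) (hsq : ((n : ℝ) + 1) ^ 2 ≤ k * (r + 1)) :
    hfun r k (n + 1) ≤ hfun r k n := by
  rw [← sub_nonpos, hfun_succ_sub hkn hnr]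
  exact div_nonpos_of_nonpos_of_nonneg (sub_nonpos.mpr hsq) (hfun_denom_pos hkn hnr).le

lemma le_hfun_succ (hkn : k ≤ n) (hnr : n < r) (hsq : (k : ℝ) * (r + 1) ≤ ((n : ℝ) + 1) ^ 2) :
    hfun r k n ≤ hfun r k (n + 1) := by
  rw [← sub_nonneg, hfun_succ_sub hkn hnr]
  exact div_nonneg (sub_nonneg.mpr hsq) (hfun_denom_pos hkn hnr).le

lemma hfun_antitoneOn {m : ℕ} (hmr : m ≤ r) (hsq : (m : ℝ) ^ 2 ≤ k * (r + 1)) :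
    AntitoneOn (hfun r k) (Set.Icc k m) := by
  refine antitoneOn_of_succ_le Set.ordConnected_Icc fun a _ ha ha' => ?_
  rw [Order.succ_eq_add_one] at ha' ⊢
  have : ((a : ℝ) + 1) ^ 2 ≤ (m : ℝ) ^ 2 := by
    gcongr
    exact_mod_cast ha'.2
  exact hfun_succ_le ha.1 (by have := ha'.2; omega) (this.trans hsq)

lemma hfun_monotoneOn {M : ℕ} (hkM : k ≤ M) (hsq : (k : ℝ) * (r + 1) ≤ ((M : ℝ) + 1) ^ 2) :
    MonotoneOn (hfun r k) (Set.Icc M r) := by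
  refine monotoneOn_of_le_succ Set.ordConnected_Icc fun a _ ha ha' => ?_
  rw [Order.succ_eq_add_one] at ha' ⊢
  have : ((M : ℝ) + 1) ^ 2 ≤ ((a : ℝ) + 1) ^ 2 := by
    gcongr
    exact_mod_cast ha.1
  exact le_hfun_succ (hkM.trans ha.1) (by have := ha'.2; omega) (hsq.trans this)

end hfun

theorem stmt1_general (r k : ℕ)
    (s : ℝ) (hs : s = Real.sqrt ((k : ℝ) * ((r : ℝ) + 1)) - 1)
    (hks : (k : ℤ) ≤ ⌊s⌋) (hsr : ⌈s⌉ ≤ (r : ℤ)) :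
    ∀ n : ℕ, k ≤ n → n ≤ r →
      min (hfun r k (⌊s⌋.toNat)) (hfun r k (⌈s⌉.toNat)) ≤ hfun r k n := by
  intro n hkn hnr
  rw [Int.floor_toNat, Int.ceil_toNat]
  have hks' : (k : ℝ) ≤ s := by exact_mod_cast Int.le_floor.mp hks
  have hs0 : 0 ≤ s := (Nat.cast_nonneg k).trans hks'
  have hkm : k ≤ ⌊s⌋₊ := Nat.le_floor hks'
  have hMr : ⌈s⌉₊ ≤ r := Nat.ceil_le.mpr (by exact_mod_cast Int.ceil_le.mp hsr)
  have hmM : ⌊s⌋₊ ≤ ⌈s⌉₊ := Nat.floor_le_ceil s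
  have hsqrt : Real.sqrt ((k : ℝ) * (r + 1)) = s + 1 := by linarith
  have hm_sq : (⌊s⌋₊ : ℝ) ^ 2 ≤ k * (r + 1) :=
    (Real.le_sqrt (Nat.cast_nonneg _) (by positivity)).mp
      (by linarith [Nat.floor_le hs0])
  have hM_sq : (k : ℝ) * (r + 1) ≤ ((⌈s⌉₊ : ℝ) + 1) ^ 2 :=
    (Real.sqrt_le_left (by positivity)).mp (by linarith [Nat.le_ceil s])
  exact min_le_of_antitoneOn_of_monotoneOn (hfun_antitoneOn (hmM.trans hMr) hm_sq)
    (hfun_monotoneOn (hkm.trans hmM) hM_sq) (Nat.ceil_le_floor_add_one s) hkn hnr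

theorem stmt1 (r k : ℕ) (hr : 0 < r) (hk : 0 < k) (hkr : k < r)
    (s : ℝ) (hs : s = Real.sqrt ((k : ℝ) * ((r : ℝ) + 1)) - 1)
    (hks : (k : ℤ) ≤ ⌊s⌋) (hsr : ⌈s⌉ ≤ (r : ℤ)) :
    ∀ n : ℕ, k ≤ n → n ≤ r →
      min (hfun r k (⌊s⌋.toNat)) (hfun r k (⌈s⌉.toNat)) ≤ hfun r k n :=
  stmt1_general r k s hs hks hsr
end

section
/- Let k ≤ n be positive integers, let λ > 0, m > 0, let C > 0 be a real number with n/C ≤ 1, and let μ ≥ 0. For each i ∈ {1, …, k}, let T_i = t_t^{(i)} + ∑_{j=1}^{S_i} η_j^{(i)}, where t_t^{(i)} has the shifted exponential distribution SExp(m/k, λ), S_i is geometric with parameter p_i = (n−i+1)/C, the η_j^{(i)} are i.i.d. nonnegative integrable random variables with mean μ independent of S_i, and all summands are integrable. Then E[∑_{i=1}^{k} T_i] = k/λ + m + C·μ·(H_n − H_{n−k}). -/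
open MeasureTheory ProbabilityTheory

/-- The shifted exponential distribution `SExp(Δ, λ)`:
    density `λ e^{-λ(x-Δ)}` for `x ≥ Δ` and `0` otherwise. -/
noncomputable def sexp (Δ lam : ℝ) : Measure ℝ :=
  volume.withDensity fun x =>
    ENNReal.ofReal (if Δ ≤ x then lam * Real.exp (-lam * (x - Δ)) else 0)

/-- Harmonic number `H_j = ∑_{i=1}^j 1/i`, as a real number. -/
noncomputable def H (j : ℕ) : ℝ := (harmonic j : ℝ)

/-! By linearity it suffices to compute `E[T_i]`. The shifted exponential contributes
`m/k + 1/λ`. For the random sum, write `∑_{j < S} η_j = ∑_j 1{j < S} η_j`; each indicator is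
independent of `η_j`, so monotone convergence gives Wald's identity
`E[∑_{j < S} η_j] = μ ∑_j P(S > j) = μ / p_i = C μ / (n - i + 1)`, and summing over `i`
telescopes into `C μ (H_n - H_{n-k})`. -/

open scoped ENNReal

theorem integral_id_sexp {Δ lam : ℝ} (hΔ : 0 ≤ Δ) (hlam : 0 < lam) :
    ∫ x, x ∂(sexp Δ lam) = Δ + 1 / lam := by
  have hdens : Measurable fun x : ℝ =>
      ENNReal.ofReal (if Δ ≤ x then lam * Real.exp (-lam * (x - Δ)) else 0) :=
    (Measurable.ite measurableSet_Ici (by fun_prop) measurable_const).ennreal_ofReal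
  rw [sexp, integral_withDensity_eq_integral_toReal_smul hdens (ae_of_all _ fun _ => by simp)]
  have hindicator : (fun x : ℝ => (ENNReal.ofReal
        (if Δ ≤ x then lam * Real.exp (-lam * (x - Δ)) else 0)).toReal • x)
      = (Set.Ici Δ).indicator fun x => lam * Real.exp (-lam * (x - Δ)) * x := by
    ext x
    by_cases hx : Δ ≤ x <;> simp [hx, Set.indicator, hlam.le, (Real.exp_pos _).le]
  rw [hindicator, integral_indicator measurableSet_Ici, integral_Ici_eq_integral_Ioi]
  have hderiv : ∀ x ∈ Set.Ici Δ, HasDerivAt (fun x => -(x + 1 / lam) * Real.exp (-lam * (x - Δ)))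
      (lam * Real.exp (-lam * (x - Δ)) * x) x := by
    intro x _
    have hexp : HasDerivAt (fun x => Real.exp (-lam * (x - Δ)))
        (Real.exp (-lam * (x - Δ)) * -lam) x := by
      simpa using (((hasDerivAt_id x).sub_const Δ).const_mul (-lam)).exp
    refine (((hasDerivAt_id x).add_const (1 / lam)).neg.mul hexp).congr_deriv ?_
    simp only [Pi.neg_apply, id]
    field_simp
    ring
  have hnonneg : ∀ x ∈ Set.Ioi Δ, 0 ≤ lam * Real.exp (-lam * (x - Δ)) * x :=
    fun x hx => by have : 0 ≤ x := hΔ.trans (le_of_lt hx); positivity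
  have htendsto : Filter.Tendsto (fun x => -(x + 1 / lam) * Real.exp (-lam * (x - Δ)))
      Filter.atTop (nhds 0) := by
    have hpow := tendsto_rpow_mul_exp_neg_mul_atTop_nhds_zero 1 lam hlam
    have hexp := tendsto_rpow_mul_exp_neg_mul_atTop_nhds_zero 0 lam hlam
    convert ((hpow.add (hexp.const_mul (1 / lam))).const_mul (Real.exp (lam * Δ))).neg
      using 2 with x
    · rw [show -lam * (x - Δ) = lam * Δ + -lam * x by ring, Real.exp_add]
      simp only [Real.rpow_one, Real.rpow_zero]
      ring
    · simp
  rw [integral_Ioi_of_hasDerivAt_of_nonneg' hderiv hnonneg htendsto]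
  simp

theorem sum_Icc_inv_sub_add_one_eq_H_sub {n k : ℕ} (hkn : k ≤ n) :
    ∑ i ∈ Finset.Icc 1 k, ((n : ℝ) - i + 1)⁻¹ = H n - H (n - k) := by
  induction k with
  | zero => simp
  | succ k ih =>
    rw [Finset.sum_Icc_succ_top (by omega), ih (by omega)]
    simp only [H]
    rw [show n - k = n - (k + 1) + 1 by omega, harmonic_succ]
    push_cast [Nat.cast_sub hkn]
    ring

theorem tsum_ofReal_one_sub_pow_eq_inv {p : ℝ} (hp0 : 0 < p) (hp1 : p ≤ 1) :
    ∑' n : ℕ, ENNReal.ofReal ((1 - p) ^ n) = ENNReal.ofReal p⁻¹ := by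
  have hq : 0 ≤ 1 - p := by linarith
  rw [← ENNReal.ofReal_tsum_of_nonneg (fun n => pow_nonneg hq n)
      (summable_geometric_of_lt_one hq (by linarith)),
    tsum_geometric_of_lt_one hq (by linarith), sub_sub_cancel]

section RandomSum

variable {Ω : Type*} [MeasurableSpace Ω] {P : Measure Ω} {S : Ω → ℕ}

theorem lintegral_sum_range_eq_tsum_measure_mul
    {η : ℕ → Ω → ℝ≥0∞} (hS : Measurable S) (hη : ∀ j, Measurable (η j))
    (hindep : IndepFun S (fun ω j => η j ω) P) :
    ∫⁻ ω, ∑ j ∈ Finset.range (S ω), η j ω ∂P = ∑' j, P {ω | j < S ω} * ∫⁻ ω, η j ω ∂P := by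
  set X : ℕ → Ω → ℝ≥0∞ := fun j ω => (Set.Ioi j).indicator 1 (S ω)
  have hX : ∀ j, Measurable (X j) :=
    fun j => (measurable_one.indicator measurableSet_Ioi).comp hS
  have hsum : ∀ ω, ∑ j ∈ Finset.range (S ω), η j ω = ∑' j, (X j * η j) ω := by
    intro ω
    rw [tsum_eq_sum (s := Finset.range (S ω)) fun j hj => by simp_all [X]]
    exact Finset.sum_congr rfl fun j hj => by simp_all [X]
  simp_rw [hsum]
  rw [lintegral_tsum fun j => ((hX j).mul (hη j)).aemeasurable]
  refine tsum_congr fun j => ?_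
  have hindep_j : IndepFun (X j) (η j) P :=
    hindep.comp (measurable_one.indicator measurableSet_Ioi) (measurable_pi_apply j)
  rw [lintegral_mul_eq_lintegral_mul_lintegral_of_indepFun (hX j) (hη j) hindep_j]
  congr 1
  exact lintegral_indicator_one (measurableSet_Ioi.preimage hS)

theorem measure_lt_eq_of_geometric {p : ℝ} (hp0 : 0 < p) (hp1 : p ≤ 1) (hS : Measurable S)
    (hSd : ∀ s : ℕ, 1 ≤ s → P {ω | S ω = s} = ENNReal.ofReal ((1 - p) ^ (s - 1) * p))
    (j : ℕ) : P {ω | j < S ω} = ENNReal.ofReal ((1 - p) ^ j) := by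
  have hq : 0 ≤ 1 - p := by linarith
  have hunion : {ω | j < S ω} = ⋃ d : ℕ, {ω | S ω = j + 1 + d} := by
    ext ω
    simp only [Set.mem_ofPred_eq, Set.mem_iUnion]
    exact ⟨fun h => ⟨S ω - (j + 1), by omega⟩, fun ⟨d, hd⟩ => by omega⟩
  have hdisj : Pairwise (Function.onFun Disjoint fun d : ℕ => {ω | S ω = j + 1 + d}) :=
    fun d d' hd => Set.disjoint_left.2 fun ω h h' => hd (by simp_all)
  have hterm : ∀ d : ℕ, P {ω | S ω = j + 1 + d}
      = ENNReal.ofReal ((1 - p) ^ j * p) * ENNReal.ofReal ((1 - p) ^ d) := by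
    intro d
    rw [hSd _ (by omega), ← ENNReal.ofReal_mul (by positivity),
      show j + 1 + d - 1 = j + d by omega, pow_add]
    ring_nf
  rw [hunion, measure_iUnion hdisj fun d => hS (measurableSet_singleton _), tsum_congr hterm,
    ENNReal.tsum_mul_left, tsum_ofReal_one_sub_pow_eq_inv hp0 hp1,
    ← ENNReal.ofReal_mul (by positivity), mul_assoc, mul_inv_cancel₀ hp0.ne', mul_one]

theorem integral_sum_range_eq_of_geometric {p μ : ℝ} {η : ℕ → Ω → ℝ}
    (hp0 : 0 < p) (hp1 : p ≤ 1) (hS : Measurable S)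
    (hSd : ∀ s : ℕ, 1 ≤ s → P {ω | S ω = s} = ENNReal.ofReal ((1 - p) ^ (s - 1) * p))
    (hη : ∀ j, Measurable (η j)) (hηnn : ∀ j ω, 0 ≤ η j ω) (hηint : ∀ j, Integrable (η j) P)
    (hηmean : ∀ j, ∫ ω, η j ω ∂P = μ) (hindep : IndepFun S (fun ω j => η j ω) P) :
    ∫ ω, ∑ j ∈ Finset.range (S ω), η j ω ∂P = μ / p := by
  have hμ : 0 ≤ μ := hηmean 0 ▸ integral_nonneg (hηnn 0)
  have hlintegral : ∀ j, ∫⁻ ω, ENNReal.ofReal (η j ω) ∂P = ENNReal.ofReal μ := fun j => by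
    rw [← ofReal_integral_eq_lintegral_ofReal (hηint j) (ae_of_all _ (hηnn j)), hηmean]
  have hindep' : IndepFun S (fun ω j => ENNReal.ofReal (η j ω)) P :=
    hindep.comp measurable_id (measurable_pi_lambda _ fun j =>
      ENNReal.measurable_ofReal.comp (measurable_pi_apply j))
  have hmeas : Measurable fun ω => ∑ j ∈ Finset.range (S ω), η j ω :=
    (measurable_from_prod_countable_right
      (f := fun q : ℕ × Ω => ∑ j ∈ Finset.range q.1, η j q.2)
      fun n => Finset.measurable_sum (Finset.range n) fun j _ => hη j).comp
    (hS.prodMk measurable_id)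
  rw [integral_eq_lintegral_of_nonneg_ae
      (ae_of_all _ fun ω => Finset.sum_nonneg fun j _ => hηnn j ω)
      hmeas.aestronglyMeasurable]
  simp_rw [ENNReal.ofReal_sum_of_nonneg fun j _ => hηnn _ _]
  rw [lintegral_sum_range_eq_tsum_measure_mul hS (fun j => (hη j).ennreal_ofReal) hindep']
  simp_rw [measure_lt_eq_of_geometric hp0 hp1 hS hSd, hlintegral]
  rw [ENNReal.tsum_mul_right, tsum_ofReal_one_sub_pow_eq_inv hp0 hp1,
    ← ENNReal.ofReal_mul (by positivity), ENNReal.toReal_ofReal (by positivity), div_eq_inv_mul]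

end RandomSum

theorem stmt4_general {Ω : Type*} [MeasurableSpace Ω] (P : Measure Ω) [IsProbabilityMeasure P]
    (k n : ℕ) (hk : 0 < k) (hkn : k ≤ n)
    (lam m : ℝ) (hlam : 0 < lam) (hm : 0 < m)
    (C : ℝ) (hC : 0 < C) (hnC : (n : ℝ) / C ≤ 1)
    (μ : ℝ)
    (t : ℕ → Ω → ℝ) (S : ℕ → Ω → ℕ) (η : ℕ → ℕ → Ω → ℝ)
    -- `t i` has the shifted exponential distribution `SExp(m/k, λ)` and is integrable
    (htmeas : ∀ i, Measurable (t i))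
    (htd : ∀ i, 1 ≤ i → i ≤ k → Measure.map (t i) P = sexp (m / k) lam)
    (htint : ∀ i, Integrable (t i) P)
    -- `S i` is geometric with parameter `p_i = (n - i + 1)/C`
    (hSmeas : ∀ i, Measurable (S i))
    (hSd : ∀ i, 1 ≤ i → i ≤ k → ∀ s : ℕ, 1 ≤ s →
      P {ω | S i ω = s} =
        ENNReal.ofReal ((1 - ((n : ℝ) - (i : ℝ) + 1) / C) ^ (s - 1)
          * (((n : ℝ) - (i : ℝ) + 1) / C)))
    -- the `η i j` are i.i.d. nonnegative integrable with mean `μ`, independent of `S i`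
    (hηmeas : ∀ i j, Measurable (η i j))
    (hηnn : ∀ i j ω, 0 ≤ η i j ω)
    (hηint : ∀ i j, Integrable (η i j) P)
    (hηmean : ∀ i j, ∫ ω, η i j ω ∂P = μ)
    (hindep : ∀ i, IndepFun (S i) (fun ω (j : ℕ) => η i j ω) P)
    -- all summands are integrable
    (hsumint : ∀ i, Integrable (fun ω => ∑ j ∈ Finset.range (S i ω), η i j ω) P) :
    ∫ ω, ∑ i ∈ Finset.Icc 1 k, (t i ω + ∑ j ∈ Finset.range (S i ω), η i j ω) ∂P
      = (k : ℝ) / lam + m + C * μ * (H n - H (n - k)) := by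
  have hT : ∀ i ∈ Finset.Icc 1 k, ∫ ω, (t i ω + ∑ j ∈ Finset.range (S i ω), η i j ω) ∂P
      = m / k + 1 / lam + C * μ * ((n : ℝ) - i + 1)⁻¹ := by
    intro i hi
    obtain ⟨hi1, hik⟩ := Finset.mem_Icc.1 hi
    have hin : (i : ℝ) ≤ n := by exact_mod_cast hik.trans hkn
    have hp0 : 0 < ((n : ℝ) - i + 1) / C := div_pos (by linarith) hC
    have hp1 : ((n : ℝ) - i + 1) / C ≤ 1 :=
      (div_le_div_of_nonneg_right (by linarith [(Nat.one_le_cast (α := ℝ)).2 hi1]) hC.le).trans hnC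
    have ht : ∫ ω, t i ω ∂P = m / k + 1 / lam := by
      rw [← integral_id_sexp (by positivity) hlam, ← htd i hi1 hik]
      exact (integral_map (htmeas i).aemeasurable aestronglyMeasurable_id).symm
    rw [integral_add (htint i) (hsumint i), ht,
      integral_sum_range_eq_of_geometric hp0 hp1 (hSmeas i) (hSd i hi1 hik) (hηmeas i) (hηnn i)
        (hηint i) (hηmean i) (hindep i)]
    field_simp
  rw [integral_finsetSum _ (f := fun i ω => t i ω + ∑ j ∈ Finset.range (S i ω), η i j ω)
      fun i _ => (htint i).add (hsumint i), Finset.sum_congr rfl hT,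
    Finset.sum_add_distrib, ← Finset.mul_sum, sum_Icc_inv_sub_add_one_eq_H_sub hkn,
    Finset.sum_const, Nat.card_Icc, Nat.add_sub_cancel, nsmul_eq_mul]
  field_simp
  ring

theorem stmt4 {Ω : Type*} [MeasurableSpace Ω] (P : Measure Ω) [IsProbabilityMeasure P]
    (k n : ℕ) (hk : 0 < k) (hn : 0 < n) (hkn : k ≤ n)
    (lam m : ℝ) (hlam : 0 < lam) (hm : 0 < m)
    (C : ℝ) (hC : 0 < C) (hnC : (n : ℝ) / C ≤ 1)
    (μ : ℝ) (hμ : 0 ≤ μ)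
    (t : ℕ → Ω → ℝ) (S : ℕ → Ω → ℕ) (η : ℕ → ℕ → Ω → ℝ)
    -- `t i` has the shifted exponential distribution `SExp(m/k, λ)` and is integrable
    (htmeas : ∀ i, Measurable (t i))
    (htd : ∀ i, 1 ≤ i → i ≤ k → Measure.map (t i) P = sexp (m / k) lam)
    (htint : ∀ i, Integrable (t i) P)
    -- `S i` is geometric with parameter `p_i = (n - i + 1)/C`
    (hSmeas : ∀ i, Measurable (S i))
    (hSd : ∀ i, 1 ≤ i → i ≤ k → ∀ s : ℕ, 1 ≤ s →
      P {ω | S i ω = s} =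
        ENNReal.ofReal ((1 - ((n : ℝ) - (i : ℝ) + 1) / C) ^ (s - 1)
          * (((n : ℝ) - (i : ℝ) + 1) / C)))
    -- the `η i j` are i.i.d. nonnegative integrable with mean `μ`, independent of `S i`
    (hηmeas : ∀ i j, Measurable (η i j))
    (hηnn : ∀ i j ω, 0 ≤ η i j ω)
    (hηint : ∀ i j, Integrable (η i j) P)
    (hηmean : ∀ i j, ∫ ω, η i j ω ∂P = μ)
    (hηiid : ∀ i, iIndepFun (η i) P)
    (hηid : ∀ i j, Measure.map (η i j) P = Measure.map (η i 0) P)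
    (hindep : ∀ i, IndepFun (S i) (fun ω (j : ℕ) => η i j ω) P)
    -- all summands are integrable
    (hsumint : ∀ i, Integrable (fun ω => ∑ j ∈ Finset.range (S i ω), η i j ω) P) :
    ∫ ω, ∑ i ∈ Finset.Icc 1 k, (t i ω + ∑ j ∈ Finset.range (S i ω), η i j ω) ∂P
      = (k : ℝ) / lam + m + C * μ * (H n - H (n - k)) :=
  stmt4_general P k n hk hkn lam m hlam hm C hC hnC μ t S η htmeas htd htint hSmeas hSd hηmeas hηnn
    hηint hηmean hindep hsumint
end

section
/- Let k < r be positive integers, let λ > 0, m > 0, c > 0 be real numbers, and for integers j with k ≤ j ≤ r define F(j) = (j+k)/λ + (j/k + 1)·m + c·(H_r + H_j − H_{r−j} − H_{j−k}). Then for every integer i with k ≤ i < r and (i+1)² ≥ k(r+1), one has F(i+1) > F(i). Consequently, F attains its minimum over {k, k+1, …, r} at some integer n* with n* ≤ max(k, ⌈√(k(r+1)) − 1⌉); i.e. the optimal number of coded chunks lies in the range [k, √(rk+k) − 1]. -/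
lemma H_succ (n : ℕ) : H (n + 1) = H n + 1 / ((n : ℝ) + 1) := by
  unfold H
  rw [harmonic_succ]
  push_cast
  ring

/-- `F r k lam m c j`: the expected message passing delay with `j` coded chunks,
    `F(j) = (j+k)/λ + (j/k + 1)·m + c·(H_r + H_j − H_{r−j} − H_{j−k})`. -/
noncomputable def F (r k : ℕ) (lam m c : ℝ) (j : ℕ) : ℝ :=
  ((j : ℝ) + (k : ℝ)) / lam + ((j : ℝ) / (k : ℝ) + 1) * m
    + c * (H r + H j - H (r - j) - H (j - k))

theorem stmt6 (k r : ℕ) (hk : 0 < k) (hkr : k < r)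
    (lam m c : ℝ) (hlam : 0 < lam) (hm : 0 < m) (hc : 0 < c) :
    (∀ i : ℕ, k ≤ i → i < r → (k : ℝ) * ((r : ℝ) + 1) ≤ ((i : ℝ) + 1) ^ 2 →
        F r k lam m c i < F r k lam m c (i + 1))
    ∧ ∃ nstar : ℕ, k ≤ nstar ∧ nstar ≤ r
        ∧ (nstar : ℤ) ≤ max (k : ℤ) ⌈Real.sqrt ((k : ℝ) * ((r : ℝ) + 1)) - 1⌉
        ∧ ∀ n : ℕ, k ≤ n → n ≤ r → F r k lam m c nstar ≤ F r k lam m c n := by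
  have hpart1 : ∀ i : ℕ, k ≤ i → i < r → (k : ℝ) * ((r : ℝ) + 1) ≤ ((i : ℝ) + 1) ^ 2 →
      F r k lam m c i < F r k lam m c (i + 1) := by
    intro i hki hir hsq
    have hkR : (0:ℝ) < (k:ℝ) := by exact_mod_cast hk
    have hiR : (k:ℝ) ≤ (i:ℝ) := by exact_mod_cast hki
    have hirR : (i:ℝ) < (r:ℝ) := by exact_mod_cast hir
    set a : ℝ := (i:ℝ) + 1 with ha
    set b : ℝ := (r:ℝ) - (i:ℝ) with hb
    set d : ℝ := (i:ℝ) + 1 - (k:ℝ) with hd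
    have hapos : 0 < a := by positivity
    have hbpos : 0 < b := by simp [hb]; linarith
    have hdpos : 0 < d := by simp [hd]; linarith
    have key : 1 / d ≤ 1 / a + 1 / b := by
      rw [div_add_div _ _ (ne_of_gt hapos) (ne_of_gt hbpos),
        div_le_div_iff₀ hdpos (by positivity)]
      nlinarith
    -- rewrite natural subtractions
    have h1 : r - i = (r - (i+1)) + 1 := by omega
    have h2 : i + 1 - k = (i - k) + 1 := by omega
    have h3 : ((r - (i+1) : ℕ) : ℝ) + 1 = b := by
      have : ((r - (i+1) : ℕ) : ℝ) = (r:ℝ) - ((i:ℝ)+1) := by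
        rw [Nat.cast_sub (by omega)]; push_cast; ring
      rw [this, hb]; ring
    have h4 : ((i - k : ℕ) : ℝ) + 1 = d := by
      have : ((i - k : ℕ) : ℝ) = (i:ℝ) - (k:ℝ) := by
        rw [Nat.cast_sub hki]
      rw [this, hd]; ring
    unfold F
    rw [h1, h2, H_succ, H_succ (i - k), H_succ i, h3, h4]
    push_cast
    have e1 : ((i:ℝ) + 1 + (k:ℝ)) / lam = ((i:ℝ) + (k:ℝ)) / lam + 1 / lam := by
      field_simp; ring
    have e2 : (((i:ℝ) + 1) / (k:ℝ) + 1) * m = ((i:ℝ) / (k:ℝ) + 1) * m + m / (k:ℝ) := by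
      field_simp; ring
    have e3 : c * (1 / d) ≤ c * (1 / a + 1 / b) :=
      mul_le_mul_of_nonneg_left key hc.le
    have hlam' : 0 < 1 / lam := by positivity
    have hmk : 0 < m / (k:ℝ) := by positivity
    rw [e1, e2]
    nlinarith [e3]
  refine ⟨hpart1, ?_⟩
  classical
  obtain ⟨nstar, hmem, hmin⟩ := Finset.exists_min_image (Finset.Icc k r)
    (F r k lam m c) ⟨k, by simp; omega⟩
  simp only [Finset.mem_Icc] at hmem
  refine ⟨nstar, hmem.1, hmem.2, ?_, fun n hn1 hn2 => hmin n (by simp [Finset.mem_Icc]; omega)⟩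
  by_contra hcon
  push_neg at hcon
  rw [max_lt_iff] at hcon
  obtain ⟨hck, hcc⟩ := hcon
  have hk1 : k + 1 ≤ nstar := by exact_mod_cast hck
  have hceil : (⌈Real.sqrt ((k : ℝ) * ((r : ℝ) + 1)) - 1⌉ : ℤ) ≤ (nstar : ℤ) - 1 := by
    omega
  have hsqrt : Real.sqrt ((k : ℝ) * ((r : ℝ) + 1)) ≤ (nstar : ℝ) := by
    have := Int.ceil_le.mp hceil
    push_cast at this
    linarith
  have hsq : (k : ℝ) * ((r : ℝ) + 1) ≤ (nstar : ℝ) ^ 2 := by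
    have h0 : (0:ℝ) ≤ (k : ℝ) * ((r : ℝ) + 1) := by positivity
    nlinarith [Real.sq_sqrt h0, Real.sqrt_nonneg ((k : ℝ) * ((r : ℝ) + 1))]
  have hi : k ≤ nstar - 1 := by omega
  have hir : nstar - 1 < r := by omega
  have hcast : ((nstar - 1 : ℕ) : ℝ) + 1 = (nstar : ℝ) := by
    rw [Nat.cast_sub (by omega)]; ring
  have := hpart1 (nstar - 1) hi hir (by rw [hcast]; exact hsq)
  rw [show nstar - 1 + 1 = nstar by omega] at this
  have hle := hmin (nstar - 1) (by simp [Finset.mem_Icc]; omega)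
  linarith
end

section
/- Let λ > 0, W > 0 and ℓ ≥ 0. Let t_t and t_a be independent real random variables, where t_t has the shifted exponential distribution SExp(ℓ, λ) and t_a is uniformly distributed on the interval [0, W]. If W ≥ ℓ, then P(t_t ≥ t_a) = 1/(λW) + ℓ/W − e^{−λ(W−ℓ)}/(λW). If W < ℓ, then P(t_t ≥ t_a) = 1. -/
/-! Conditioning on the warden's arrival time `y`, the transmission is still running with
probability `P(t ≥ y) = e^{-λ(max y ℓ - ℓ)}`, so
`P(t ≥ a) = W⁻¹ ∫₀^W e^{-λ(max y ℓ - ℓ)} dy`. The integrand is `1` on `[0, ℓ]` and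
`e^{-λ(y - ℓ)}` beyond, which gives both cases. -/

open MeasureTheory ProbabilityTheory

noncomputable def unif (W : ℝ) : Measure ℝ :=
  (ENNReal.ofReal W)⁻¹ • volume.restrict (Set.Icc 0 W)

open Set Real

theorem ProbabilityTheory.IndepFun.measure_le_eq_lintegral_map {Ω α : Type*}
    [MeasurableSpace Ω] {P : Measure Ω} [IsFiniteMeasure P]
    [MeasurableSpace α] [LinearOrder α] [TopologicalSpace α] [OrderClosedTopology α]
    [OpensMeasurableSpace α] [SecondCountableTopology α]
    {X Y : Ω → α} (hX : Measurable X) (hY : Measurable Y) (h : IndepFun X Y P) :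
    P {ω | Y ω ≤ X ω} = ∫⁻ y, P.map X (Ici y) ∂(P.map Y) := by
  have hs : MeasurableSet {p : α × α | p.2 ≤ p.1} :=
    measurableSet_le measurable_snd measurable_fst
  have hmap := (indepFun_iff_map_prod_eq_prod_map_map hX.aemeasurable hY.aemeasurable).mp h
  calc P {ω | Y ω ≤ X ω} = P.map (fun ω => (X ω, Y ω)) {p | p.2 ≤ p.1} :=
        (Measure.map_apply (hX.prodMk hY) hs).symm
    _ = ∫⁻ y, P.map X (Ici y) ∂(P.map Y) := by rw [hmap, Measure.prod_apply_symm hs]; rfl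

theorem sexp_eq_withDensity_restrict (ℓ lam : ℝ) :
    sexp ℓ lam = (volume.restrict (Ici ℓ)).withDensity
      fun x => ENNReal.ofReal (lam * exp (-lam * (x - ℓ))) := by
  rw [← withDensity_indicator measurableSet_Ici, sexp]
  congr 1 with x
  by_cases hx : ℓ ≤ x <;> simp [hx]

theorem lintegral_Ici_ofReal_mul_exp_neg_mul_sub {lam : ℝ} (hlam : 0 < lam) (ℓ z : ℝ) :
    ∫⁻ x in Ici z, ENNReal.ofReal (lam * exp (-lam * (x - ℓ)))
      = ENNReal.ofReal (exp (-lam * (z - ℓ))) := by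
  have hexp : ∀ x, lam * exp (-lam * (x - ℓ)) = lam * exp (lam * ℓ) * exp (-lam * x) := by
    intro x
    rw [mul_assoc, ← exp_add]
    ring_nf
  simp_rw [hexp]
  rw [setLIntegral_congr Ioi_ae_eq_Ici.symm, ← ofReal_integral_eq_lintegral_ofReal,
    integral_const_mul, integral_exp_mul_Ioi (by linarith)]
  · congr 1
    rw [neg_div_neg_eq, mul_comm lam, mul_assoc, mul_div_cancel₀ _ hlam.ne', ← exp_add]
    ring_nf
  · exact (exp_neg_integrableOn_Ioi z hlam).const_mul _
  · exact ae_of_all _ fun x => by positivity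

theorem sexp_Ici {lam : ℝ} (hlam : 0 < lam) (ℓ y : ℝ) :
    sexp ℓ lam (Ici y) = ENNReal.ofReal (exp (-lam * (max y ℓ - ℓ))) := by
  rw [sexp_eq_withDensity_restrict, withDensity_apply _ measurableSet_Ici,
    Measure.restrict_restrict measurableSet_Ici, Ici_inter_Ici,
    lintegral_Ici_ofReal_mul_exp_neg_mul_sub hlam]

theorem lintegral_ofReal_unif {W : ℝ} (hW : 0 < W) {g : ℝ → ℝ} (hg : Continuous g)
    (hg0 : ∀ y, 0 ≤ g y) :
    ∫⁻ y, ENNReal.ofReal (g y) ∂(unif W) = ENNReal.ofReal ((∫ y in 0..W, g y) / W) := by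
  rw [unif, lintegral_smul_measure, ← ofReal_integral_eq_lintegral_ofReal
      hg.integrableOn_Icc (ae_of_all _ fun y => hg0 y),
    integral_Icc_eq_integral_Ioc, ← intervalIntegral.integral_of_le hW.le,
    ← ENNReal.ofReal_inv_of_pos hW, smul_eq_mul, ← ENNReal.ofReal_mul (by positivity),
    div_eq_inv_mul]

theorem integral_exp_neg_mul_sub {lam : ℝ} (hlam : lam ≠ 0) (ℓ a b : ℝ) :
    ∫ y in a..b, exp (-lam * (y - ℓ))
      = (exp (-lam * (a - ℓ)) - exp (-lam * (b - ℓ))) / lam := by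
  have hshift :=
    intervalIntegral.integral_comp_sub_right (fun u => exp (-lam * u)) (a := a) (b := b) ℓ
  have hscale := intervalIntegral.integral_comp_mul_left exp (a := a - ℓ) (b := b - ℓ)
    (neg_ne_zero.2 hlam)
  rw [hshift, hscale, integral_exp, smul_eq_mul]
  field_simp
  ring

theorem integral_exp_neg_mul_max_sub_of_le {lam W ℓ : ℝ} (hW : 0 ≤ W) (hWℓ : W ≤ ℓ) :
    ∫ y in 0..W, exp (-lam * (max y ℓ - ℓ)) = W := by
  have h : EqOn (fun y => exp (-lam * (max y ℓ - ℓ))) (fun _ => 1) (uIcc 0 W) := by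
    intro y hy
    rw [uIcc_of_le hW] at hy
    simp [max_eq_right (hy.2.trans hWℓ)]
  rw [intervalIntegral.integral_congr h, intervalIntegral.integral_const, smul_eq_mul, mul_one,
    sub_zero]

theorem integral_exp_neg_mul_max_sub_of_ge {lam W ℓ : ℝ} (hlam : 0 < lam) (hℓ : 0 ≤ ℓ)
    (hℓW : ℓ ≤ W) :
    ∫ y in 0..W, exp (-lam * (max y ℓ - ℓ)) = ℓ + (1 - exp (-lam * (W - ℓ))) / lam := by
  have hcont : Continuous fun y => exp (-lam * (max y ℓ - ℓ)) := by fun_prop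
  have h : EqOn (fun y => exp (-lam * (max y ℓ - ℓ))) (fun y => exp (-lam * (y - ℓ)))
      (uIcc ℓ W) := by
    intro y hy
    rw [uIcc_of_le hℓW] at hy
    simp [max_eq_left hy.1]
  rw [← intervalIntegral.integral_add_adjacent_intervals (b := ℓ) (hcont.intervalIntegrable _ _)
    (hcont.intervalIntegrable _ _), integral_exp_neg_mul_max_sub_of_le hℓ le_rfl,
    intervalIntegral.integral_congr h, integral_exp_neg_mul_sub hlam.ne', sub_self, mul_zero,
    exp_zero]

theorem stmt7 {Ω : Type*} [MeasurableSpace Ω] (P : Measure Ω) [IsProbabilityMeasure P]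
    (lam W ℓ : ℝ) (hlam : 0 < lam) (hW : 0 < W) (hℓ : 0 ≤ ℓ)
    (t a : Ω → ℝ) (htmeas : Measurable t) (hameas : Measurable a)
    (ht : Measure.map t P = sexp ℓ lam)
    (ha : Measure.map a P = unif W)
    (hindep : IndepFun t a P) :
    (ℓ ≤ W → P {ω | a ω ≤ t ω}
        = ENNReal.ofReal (1 / (lam * W) + ℓ / W - Real.exp (-lam * (W - ℓ)) / (lam * W)))
    ∧ (W < ℓ → P {ω | a ω ≤ t ω} = 1) := by
  have hP : P {ω | a ω ≤ t ω}
      = ENNReal.ofReal ((∫ y in 0..W, exp (-lam * (max y ℓ - ℓ))) / W) := by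
    rw [hindep.measure_le_eq_lintegral_map htmeas hameas, ht, ha]
    simp_rw [sexp_Ici hlam]
    exact lintegral_ofReal_unif hW (by fun_prop) fun y => (exp_pos _).le
  refine ⟨fun hℓW => ?_, fun hWℓ => ?_⟩
  · rw [hP, integral_exp_neg_mul_max_sub_of_ge hlam hℓ hℓW]
    congr 1
    field_simp
    ring
  · rw [hP, integral_exp_neg_mul_max_sub_of_le hW.le hWℓ.le, div_self hW.ne', ENNReal.ofReal_one]
end

section
/- Let B be a real number with 0 < B ≤ 1 and let a, n be integers with 1 ≤ a < n. Then (1 − B/(a+1))^{n+a+1} > (1 − B/a)^{n+a}. -/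
theorem stmt9 (B : ℝ) (hB0 : 0 < B) (hB1 : B ≤ 1) (a n : ℕ) (ha : 1 ≤ a) (han : a < n) :
    (1 - B / ((a : ℝ) + 1)) ^ (n + a + 1) > (1 - B / (a : ℝ)) ^ (n + a) := by
  have haR : (1:ℝ) ≤ (a:ℝ) := by exact_mod_cast ha
  have ha0 : (0:ℝ) < (a:ℝ) := by linarith
  have hnR : (a:ℝ) < (n:ℝ) := by exact_mod_cast han
  set y : ℝ := 1 - B / (a:ℝ) with hy
  set x : ℝ := 1 - B / ((a:ℝ) + 1) with hx
  have hy0 : 0 ≤ y := by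
    have : B / (a:ℝ) ≤ 1 := by
      rw [div_le_one ha0]; linarith
    simp [hy]; linarith
  have hx0 : 0 < x := by
    have : B / ((a:ℝ) + 1) < 1 := by
      rw [div_lt_one (by linarith)]; linarith
    simp [hx]; linarith
  set N : ℕ := n + a with hN
  have hNR : (N:ℝ) = (n:ℝ) + (a:ℝ) := by push_cast [hN]; ring
  have hN1 : (0:ℝ) < (N:ℝ) + 1 := by positivity
  -- key linear inequality: N*y + 1 < (N+1)*x
  have key : (N:ℝ) * y + 1 < ((N:ℝ) + 1) * x := by
    have hu : B / (a:ℝ) * (a:ℝ) = B := div_mul_cancel₀ B (ne_of_gt ha0)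
    have hv : B / ((a:ℝ) + 1) * ((a:ℝ) + 1) = B := div_mul_cancel₀ B (by linarith)
    have hupos : 0 < B / (a:ℝ) := div_pos hB0 ha0
    have hvpos : 0 < B / ((a:ℝ) + 1) := div_pos hB0 (by linarith)
    rw [hNR, hy, hx]
    nlinarith [hupos, mul_pos hvpos ha0,
      mul_lt_mul_of_pos_left hnR hupos]
  set m : ℝ := ((N:ℝ) * y + 1) / ((N:ℝ) + 1) with hm
  have hm0 : 0 ≤ m := by positivity
  have hmx : m < x := by
    rw [hm, div_lt_iff₀ hN1]; linarith
  -- AM-GM: y^(N/(N+1)) ≤ m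
  have amgm : y ^ ((N:ℝ) / ((N:ℝ) + 1)) ≤ m := by
    have h := Real.geom_mean_le_arith_mean2_weighted
      (w₁ := (N:ℝ) / ((N:ℝ) + 1)) (w₂ := 1 / ((N:ℝ) + 1)) (p₁ := y) (p₂ := 1)
      (by positivity) (by positivity) hy0 zero_le_one (by field_simp)
    rw [Real.one_rpow, mul_one, mul_one] at h
    calc y ^ ((N:ℝ) / ((N:ℝ) + 1)) ≤ (N:ℝ) / ((N:ℝ) + 1) * y + 1 / ((N:ℝ) + 1) := h
      _ = m := by rw [hm]; ring
  have hyN : y ^ N ≤ m ^ (N + 1) := by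
    have h1 : (y ^ ((N:ℝ) / ((N:ℝ) + 1))) ^ ((N:ℝ) + 1) ≤ m ^ ((N:ℝ) + 1) :=
      Real.rpow_le_rpow (Real.rpow_nonneg hy0 _) amgm (le_of_lt hN1)
    rw [← Real.rpow_natCast y N, ← Real.rpow_natCast m (N + 1)]
    push_cast
    calc y ^ ((N:ℝ)) = (y ^ ((N:ℝ) / ((N:ℝ) + 1))) ^ ((N:ℝ) + 1) := by
          rw [← Real.rpow_mul hy0]
          congr 1
          field_simp
      _ ≤ m ^ ((N:ℝ) + 1) := h1
  have hmx' : m ^ (N + 1) < x ^ (N + 1) := by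
    exact pow_lt_pow_left₀ hmx hm0 (Nat.succ_ne_zero N)
  show x ^ (n + a + 1) > y ^ (n + a)
  calc y ^ (n + a) = y ^ N := by rw [hN]
    _ ≤ m ^ (N + 1) := hyN
    _ < x ^ (N + 1) := hmx'
    _ = x ^ (n + a + 1) := by rw [hN]
end

section
/- Let B be a real number with 0 < B ≤ 1 and let k ≤ n be positive integers. Then (1 − B/k)^{n+k} ≤ (1 − B/n)^{2n}, with strict inequality whenever k < n. In other words, over k ∈ {1, …, n} the quantity (1 − B/k)^{n+k} is maximized at k = n. -/
/-!
Put `t = 2n/(n+k) ≥ 1`. Bernoulli's inequality for real exponents gives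
`(1 - B/n)^t ≥ 1 - tB/n = 1 - 2B/(n+k) ≥ 1 - B/k`, the last step being `2k ≤ n + k`;
raising both sides to the power `n + k` turns `t (n + k)` into `2n`.
-/

open Real

lemma one_sub_mul_le_rpow_one_sub {x t : ℝ} (hx : x ≤ 1) (ht : 1 ≤ t) :
    1 - t * x ≤ (1 - x) ^ t := by
  simpa [← sub_eq_add_neg] using one_add_mul_self_le_rpow_one_add (neg_le_neg hx) ht

section

variable {B x y : ℝ}

lemma one_sub_div_le_rpow_two_mul_div (hB : 0 ≤ B) (hx : 0 < x) (hxy : x ≤ y) (hBy : B ≤ y) :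
    1 - B / x ≤ (1 - B / y) ^ (2 * y / (y + x)) := by
  have hy : 0 < y := hx.trans_le hxy
  calc 1 - B / x ≤ 1 - 2 * y / (y + x) * (B / y) := by
        rw [div_mul_div_comm, sub_le_sub_iff_left, div_le_div_iff₀ (by positivity) hx]
        nlinarith [mul_nonneg (mul_nonneg hB hy.le) (sub_nonneg.2 hxy)]
    _ ≤ (1 - B / y) ^ (2 * y / (y + x)) :=
        one_sub_mul_le_rpow_one_sub ((div_le_one hy).2 hBy)
          ((one_le_div (by positivity)).2 (by linarith))

lemma one_sub_div_lt_rpow_two_mul_div (hB : 0 < B) (hx : 0 < x) (hxy : x < y) (hBy : B ≤ y) :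
    1 - B / x < (1 - B / y) ^ (2 * y / (y + x)) := by
  have hy : 0 < y := hx.trans hxy
  calc 1 - B / x < 1 - 2 * y / (y + x) * (B / y) := by
        rw [div_mul_div_comm, sub_lt_sub_iff_left, div_lt_div_iff₀ (by positivity) hx]
        nlinarith [mul_pos (mul_pos hB hy) (sub_pos.2 hxy)]
    _ ≤ (1 - B / y) ^ (2 * y / (y + x)) :=
        one_sub_mul_le_rpow_one_sub ((div_le_one hy).2 hBy)
          ((one_le_div (by positivity)).2 (by linarith))

lemma rpow_div_rpow_self {a : ℝ} (ha : 0 ≤ a) (r : ℝ) {s : ℝ} (hs : s ≠ 0) :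
    (a ^ (r / s)) ^ s = a ^ r := by
  rw [← rpow_mul ha, div_mul_cancel₀ _ hs]

lemma one_sub_div_rpow_add_le (hB : 0 ≤ B) (hBx : B ≤ x) (hx : 0 < x) (hxy : x ≤ y) :
    (1 - B / x) ^ (y + x) ≤ (1 - B / y) ^ (2 * y) :=
  calc (1 - B / x) ^ (y + x) ≤ ((1 - B / y) ^ (2 * y / (y + x))) ^ (y + x) :=
        rpow_le_rpow (by rw [sub_nonneg, div_le_one hx]; exact hBx)
          (one_sub_div_le_rpow_two_mul_div hB hx hxy (hBx.trans hxy)) (by linarith)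
    _ = (1 - B / y) ^ (2 * y) :=
        rpow_div_rpow_self (by rw [sub_nonneg, div_le_one (hx.trans_le hxy)]; linarith) _ (by linarith)

lemma one_sub_div_rpow_add_lt (hB : 0 < B) (hBx : B ≤ x) (hx : 0 < x) (hxy : x < y) :
    (1 - B / x) ^ (y + x) < (1 - B / y) ^ (2 * y) :=
  calc (1 - B / x) ^ (y + x) < ((1 - B / y) ^ (2 * y / (y + x))) ^ (y + x) :=
        rpow_lt_rpow (by rw [sub_nonneg, div_le_one hx]; exact hBx)
          (one_sub_div_lt_rpow_two_mul_div hB hx hxy (hBx.trans hxy.le)) (by linarith)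
    _ = (1 - B / y) ^ (2 * y) :=
        rpow_div_rpow_self (by rw [sub_nonneg, div_le_one (hx.trans hxy)]; linarith) _ (by linarith)

end

theorem stmt10 (B : ℝ) (hB0 : 0 < B) (hB1 : B ≤ 1) (k n : ℕ) (hk : 0 < k) (hkn : k ≤ n) :
    (1 - B / (k : ℝ)) ^ (n + k) ≤ (1 - B / (n : ℝ)) ^ (2 * n)
    ∧ (k < n → (1 - B / (k : ℝ)) ^ (n + k) < (1 - B / (n : ℝ)) ^ (2 * n)) := by
  have hk' : (0 : ℝ) < k := by exact_mod_cast hk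
  have hBk : B ≤ k := hB1.trans (by exact_mod_cast hk)
  simp only [← rpow_natCast, Nat.cast_add, Nat.cast_mul, Nat.cast_ofNat]
  exact ⟨one_sub_div_rpow_add_le hB0.le hBk hk' (by exact_mod_cast hkn),
    fun hlt => one_sub_div_rpow_add_lt hB0 hBk hk' (by exact_mod_cast hlt)⟩
end

section
/- Let B be a real number and a, n integers with 1 ≤ a < n, 0 < B ≤ 1 and B < a. Then a(a+1−B) / ((a−B)(a+1)) > 1 + B / ((a+1−B)(a+n)). -/
/-!
Since `a (a + 1 - B) = (a - B)(a + 1) + B`, the left side is `1 + B / ((a - B)(a + 1))`, and the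
inequality reduces to `(a - B)(a + 1) < (a + 1 - B)(a + n)`, which holds factor by factor.
-/

section

variable {K : Type*} [Field K]

lemma mul_add_one_sub_div_eq_one_add_div {x B : K} (hxB : x - B ≠ 0) (hx : x + 1 ≠ 0) :
    x * (x + 1 - B) / ((x - B) * (x + 1)) = 1 + B / ((x - B) * (x + 1)) := by
  field_simp
  ring

variable [LinearOrder K] [IsStrictOrderedRing K]

lemma sub_mul_add_one_lt_add_one_sub_mul_add {x B y : K} (hB : 0 ≤ B) (hxB : 0 < x - B)
    (hy : 1 ≤ y) :
    (x - B) * (x + 1) < (x + 1 - B) * (x + y) := by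
  have hx : 0 < x + 1 := by linarith
  calc (x - B) * (x + 1) < (x + 1 - B) * (x + 1) := by gcongr; linarith
    _ ≤ (x + 1 - B) * (x + y) := by gcongr; linarith

end

theorem stmt11_general (B : ℝ) (a n : ℕ) (han : a < n)
    (hB0 : 0 < B) (hBa : B < (a : ℝ)) :
    (a : ℝ) * ((a : ℝ) + 1 - B) / (((a : ℝ) - B) * ((a : ℝ) + 1))
      > 1 + B / (((a : ℝ) + 1 - B) * ((a : ℝ) + (n : ℝ))) := by
  have haB : 0 < (a : ℝ) - B := sub_pos.mpr hBa
  have hn : (1 : ℝ) ≤ n := by exact_mod_cast Nat.one_le_of_lt han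
  have hd : 0 < ((a : ℝ) - B) * ((a : ℝ) + 1) := by positivity
  rw [mul_add_one_sub_div_eq_one_add_div haB.ne' (by positivity), gt_iff_lt, add_lt_add_iff_left]
  exact div_lt_div_of_pos_left hB0 hd (sub_mul_add_one_lt_add_one_sub_mul_add hB0.le haB hn)

theorem stmt11 (B : ℝ) (a n : ℕ) (ha : 1 ≤ a) (han : a < n)
    (hB0 : 0 < B) (hB1 : B ≤ 1) (hBa : B < (a : ℝ)) :
    (a : ℝ) * ((a : ℝ) + 1 - B) / (((a : ℝ) - B) * ((a : ℝ) + 1))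
      > 1 + B / (((a : ℝ) + 1 - B) * ((a : ℝ) + (n : ℝ))) :=
  stmt11_general B a n han hB0 hBa
end
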